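/- Let A ∈ ℝ^{M×N} with nonzero rows a¹, ..., a^M and let b ∈ ℝ^M be such that the linear system A·x = b is consistent. Let (x^k)_{k∈ℕ} be generated by the ASI–ART algorithm: x^1 ∈ ℝ^N arbitrary, (i_k)_{k∈ℕ} an almost cyclic control on {1,...,M}, delays (d_k)_{k∈ℕ} with 0 ≤ d_k ≤ min(τ, k−1) for some τ ≥ 0, x̂^k := x^{k−d_k}, and x^{k+1} := x^k for k ≤ τ and x^{k+1} := x^k − λ_k·((⟨a^{i_k}, x̂^k⟩ − b_{i_k})/‖a^{i_k}‖²)·a^{i_k} otherwise. If there is ε > 0 such that ε ≤ λ_k ≤ 1/(2τ + 1 + ε) for all k, then (x^k) converges to a solution x* of A·x = b. -/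

import Mathlib

/-!
For a solution `u`, one relaxed projection step with parameter `λ` decreases `‖y - u‖²` by
`(2/λ - 1)` times the squared step length, up to a cross term `2 ‖step‖ ‖yᵏ - x̂ᵏ‖` caused by the
delay. Bounding `‖yᵏ - x̂ᵏ‖` by the last `τ` step lengths and using `2st ≤ s² + t²`, each squared
step is charged at most `τ + 1` times, which `λ ≤ 1/(τ+1)` pays for: the squared steps are
summable and the iterates bounded. Then the residual of the active hyperplane tends to zero, and by
almost cyclicity so do all residuals, so every cluster point `z` is a solution. Finally
`‖yᵏ - z‖²` decreases up to summable errors, hence converges, and its limit is `0` along the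
subsequence tending to `z`.
-/

open Filter Finset Topology
open scoped RealInnerProductSpace NNReal

section RealSequences

theorem sum_sum_Ico_sub_le {S : ℕ → ℝ} (hS : ∀ j, 0 ≤ S j) (τ n : ℕ) :
    ∑ k ∈ range n, ∑ j ∈ Ico (k - τ) k, S j ≤ τ * ∑ j ∈ range n, S j := by
  rw [sum_comm' (t' := range n) (s' := fun j => Ioc j (j + τ) ∩ range n)
    (fun k j => by simp only [mem_range, mem_Ico, mem_Ioc, mem_inter]; omega), mul_sum]
  refine sum_le_sum fun j _ => ?_
  rw [sum_const, nsmul_eq_mul]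
  have hcard : #(Ioc j (j + τ) ∩ range n) ≤ τ :=
    (card_le_card inter_subset_left).trans (by simp)
  exact mul_le_mul_of_nonneg_right (by exact_mod_cast hcard) (hS j)

theorem add_sum_le_of_le_sub_add_sum_Ico {v S : ℕ → ℝ} {τ : ℕ} (hS : ∀ j, 0 ≤ S j)
    (h : ∀ k, v (k + 1) ≤ v k - (τ + 1) * S k + ∑ j ∈ Ico (k - τ) k, S j) (n : ℕ) :
    v n + ∑ k ∈ range n, S k ≤ v 0 := by
  have hsum : ∑ k ∈ range n, (v (k + 1) - v k) ≤
      ∑ k ∈ range n, (∑ j ∈ Ico (k - τ) k, S j - (τ + 1) * S k) :=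
    sum_le_sum fun k _ => by linarith [h k]
  rw [sum_range_sub, sum_sub_distrib, ← mul_sum] at hsum
  linarith [sum_sum_Ico_sub_le hS τ n]

theorem summable_sum_Ico_sub {S : ℕ → ℝ} (hS : ∀ j, 0 ≤ S j) (hSs : Summable S) (τ : ℕ) :
    Summable fun k => ∑ j ∈ Ico (k - τ) k, S j :=
  summable_of_sum_range_le (fun _ => sum_nonneg fun j _ => hS j) fun n =>
    (sum_sum_Ico_sub_le hS τ n).trans <|
      mul_le_mul_of_nonneg_left (hSs.sum_le_tsum _ fun j _ => hS j) τ.cast_nonneg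

theorem tendsto_sum_Ico_add {s : ℕ → ℝ} (hs : Tendsto s atTop (𝓝 0)) (m : ℕ) :
    Tendsto (fun k => ∑ j ∈ Ico k (k + m), s j) atTop (𝓝 0) := by
  simp_rw [sum_Ico_eq_sum_range, add_tsub_cancel_left]
  simpa using tendsto_finsetSum (range m) fun i _ => hs.comp (tendsto_add_atTop_nat i)

theorem tendsto_sum_Ico_sub {s : ℕ → ℝ} (hs : Tendsto s atTop (𝓝 0)) (τ : ℕ) :
    Tendsto (fun k => ∑ j ∈ Ico (k - τ) k, s j) atTop (𝓝 0) :=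
  ((tendsto_sum_Ico_add hs τ).comp (tendsto_sub_atTop_nat τ)).congr' <|
    eventually_atTop.2 ⟨τ, fun k hk => by simp [Nat.sub_add_cancel hk]⟩

theorem two_mul_mul_sum_le {ι : Type*} (T : Finset ι) (t : ℝ) (s : ι → ℝ) :
    2 * t * ∑ j ∈ T, s j ≤ #T * t ^ 2 + ∑ j ∈ T, s j ^ 2 := by
  rw [mul_sum, ← nsmul_eq_mul, ← sum_const, ← sum_add_distrib]
  exact sum_le_sum fun j _ => two_mul_le_add_sq t (s j)

theorem exists_tendsto_of_le_add_of_summable {v c : ℕ → ℝ} (hv : ∀ k, 0 ≤ v k)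
    (hc : ∀ k, 0 ≤ c k) (hcs : Summable c) (h : ∀ k, v (k + 1) ≤ v k + c k) :
    ∃ L, Tendsto v atTop (𝓝 L) := by
  have hanti : Antitone fun n => v n - ∑ k ∈ range n, c k :=
    antitone_nat_of_succ_le fun n => by rw [sum_range_succ]; linarith [h n]
  have hbdd : BddBelow (Set.range fun n => v n - ∑ k ∈ range n, c k) :=
    ⟨-∑' k, c k, by
      rintro _ ⟨n, rfl⟩
      linarith [hv n, hcs.sum_le_tsum (range n) fun k _ => hc k]⟩
  exact ⟨_, by simpa using (tendsto_atTop_ciInf hanti hbdd).add hcs.hasSum.tendsto_sum_nat⟩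

end RealSequences

section MetricSequences

variable {X : Type*} [PseudoMetricSpace X]

theorem tendsto_of_dist_sq_le_add_of_summable {f : ℕ → X} {z : X} {c : ℕ → ℝ}
    (hc : ∀ k, 0 ≤ c k) (hcs : Summable c)
    (h : ∀ k, dist (f (k + 1)) z ^ 2 ≤ dist (f k) z ^ 2 + c k) {φ : ℕ → ℕ} (hφ : StrictMono φ)
    (hfz : Tendsto (f ∘ φ) atTop (𝓝 z)) : Tendsto f atTop (𝓝 z) := by
  obtain ⟨L, hL⟩ := exists_tendsto_of_le_add_of_summable (v := fun k => dist (f k) z ^ 2)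
    (fun _ => sq_nonneg _) hc hcs h
  have hsub : Tendsto (fun n => dist (f (φ n)) z ^ 2) atTop (𝓝 0) := by
    simpa using (tendsto_iff_dist_tendsto_zero.1 hfz).pow 2
  obtain rfl : L = 0 := tendsto_nhds_unique (hL.comp hφ.tendsto_atTop) hsub
  rw [tendsto_iff_dist_tendsto_zero]
  simpa [Real.sqrt_sq dist_nonneg] using hL.sqrt

theorem tendsto_zero_of_tendsto_zero_along_control {ι : Type*} {g : ι → X → ℝ} {f : ℕ → X}
    {ik : ℕ → ι} {M' : ℕ} {K : ℝ≥0} (i : ι) (hg : LipschitzWith K (g i))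
    (hcyc : ∀ k, ∃ l, k + 1 ≤ l ∧ l ≤ k + M' ∧ ik l = i)
    (hstep : Tendsto (fun k => dist (f k) (f (k + 1))) atTop (𝓝 0))
    (h : Tendsto (fun k => g (ik k) (f k)) atTop (𝓝 0)) :
    Tendsto (fun k => g i (f k)) atTop (𝓝 0) := by
  choose l hl_lo hl_hi hl_eq using hcyc
  have hl : Tendsto l atTop atTop :=
    tendsto_atTop_mono (fun k => (hl_lo k).trans' k.le_succ) tendsto_id
  have hvisit : Tendsto (fun k => g i (f (l k))) atTop (𝓝 0) := by
    simpa [Function.comp_def, hl_eq] using h.comp hl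
  have hdrift : Tendsto (fun k => g i (f k) - g i (f (l k))) atTop (𝓝 0) := by
    refine squeeze_zero_norm (fun k => ?_)
      (by simpa using (tendsto_sum_Ico_add hstep M').const_mul (K : ℝ))
    calc ‖g i (f k) - g i (f (l k))‖ ≤ K * dist (f k) (f (l k)) := hg.dist_le_mul _ _
      _ ≤ K * ∑ j ∈ Ico k (k + M'), dist (f j) (f (j + 1)) := by
        gcongr
        exact (dist_le_Ico_sum_dist f (by linarith [hl_lo k])).trans <|
          sum_le_sum_of_subset_of_nonneg (Ico_subset_Ico le_rfl (hl_hi k))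
            fun _ _ _ => dist_nonneg
  simpa using hdrift.add hvisit

end MetricSequences

section Hyperplane

variable {E : Type*} [NormedAddCommGroup E] [InnerProductSpace ℝ E]

/-- `z - P z`, where `P` is the orthogonal projection onto the hyperplane `⟪a, x⟫ = β`. -/
noncomputable def hyperplaneResidual (a : E) (β : ℝ) (z : E) : E :=
  ((⟪a, z⟫ - β) / ‖a‖ ^ 2) • a

theorem norm_hyperplaneResidual (a : E) (β : ℝ) (z : E) :
    ‖hyperplaneResidual a β z‖ = |⟪a, z⟫ - β| / ‖a‖ := by
  rw [hyperplaneResidual, norm_smul, Real.norm_eq_abs, abs_div, abs_of_nonneg (sq_nonneg ‖a‖)]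
  rcases eq_or_ne ‖a‖ 0 with ha | ha
  · simp [ha]
  · field_simp

theorem inner_sub_hyperplaneResidual {a u : E} {β : ℝ} (hu : ⟪a, u⟫ = β) (z : E) :
    ⟪z - u, hyperplaneResidual a β z⟫ = ‖hyperplaneResidual a β z‖ ^ 2 := by
  rw [norm_hyperplaneResidual, hyperplaneResidual, real_inner_smul_right, real_inner_comm a,
    inner_sub_right, hu, div_pow, sq_abs]
  rcases eq_or_ne ‖a‖ 0 with ha | ha
  · simp [ha]
  · field_simp

theorem dist_sq_sub_smul_hyperplaneResidual_le {a u : E} {β lam : ℝ} (hu : ⟪a, u⟫ = β)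
    (hlam : 0 < lam) (x z : E) :
    dist (x - lam • hyperplaneResidual a β z) u ^ 2 ≤
      dist x u ^ 2 - (2 / lam - 1) * dist x (x - lam • hyperplaneResidual a β z) ^ 2 +
        2 * dist x (x - lam • hyperplaneResidual a β z) * dist x z := by
  set R := hyperplaneResidual a β z
  have hstep : dist x (x - lam • R) = lam * ‖R‖ := by
    rw [dist_eq_norm, sub_sub_cancel, norm_smul, Real.norm_of_nonneg hlam.le]
  have hexpand :
      dist (x - lam • R) u ^ 2 = dist x u ^ 2 - 2 * lam * ⟪x - u, R⟫ + lam ^ 2 * ‖R‖ ^ 2 := by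
    rw [dist_eq_norm, dist_eq_norm, sub_right_comm, norm_sub_sq_real, real_inner_smul_right,
      norm_smul, Real.norm_of_nonneg hlam.le]
    ring
  have hsplit : ⟪x - u, R⟫ = ⟪x - z, R⟫ + ‖R‖ ^ 2 := by
    rw [← inner_sub_hyperplaneResidual hu, ← inner_add_left, sub_add_sub_cancel]
  have hcs : -⟪x - z, R⟫ ≤ dist x z * ‖R‖ := by
    rw [dist_eq_norm]
    exact (neg_le_abs _).trans (abs_real_inner_le_norm _ _)
  have hcoef : (2 / lam - 1) * (lam * ‖R‖) ^ 2 = 2 * lam * ‖R‖ ^ 2 - lam ^ 2 * ‖R‖ ^ 2 := by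
    field_simp
  rw [hexpand, hsplit, hstep, hcoef]
  nlinarith [mul_le_mul_of_nonneg_left hcs hlam.le]

end Hyperplane

section AsiArt

variable {E ι : Type*} [NormedAddCommGroup E] [InnerProductSpace ℝ E]

structure IsAsiArtSeq (a : ι → E) (b : ι → ℝ) (τ : ℕ) (lam : ℕ → ℝ) (ik : ℕ → ι) (d : ℕ → ℕ)
    (y : ℕ → E) : Prop where
  delay_le : ∀ k, d k ≤ τ
  succ_eq : ∀ k, y (k + 1) =
    if k ≤ τ then y k else y k - lam k • hyperplaneResidual (a (ik k)) (b (ik k)) (y (k - d k))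

namespace IsAsiArtSeq

variable {a : ι → E} {b : ι → ℝ} {τ : ℕ} {lam : ℕ → ℝ} {ik : ℕ → ι} {d : ℕ → ℕ} {y : ℕ → E}

theorem dist_delayed_le (hy : IsAsiArtSeq a b τ lam ik d y) (k : ℕ) :
    dist (y k) (y (k - d k)) ≤ ∑ j ∈ Ico (k - τ) k, dist (y j) (y (j + 1)) := by
  rw [dist_comm]
  exact (dist_le_Ico_sum_dist y (Nat.sub_le _ _)).trans <|
    sum_le_sum_of_subset_of_nonneg (Ico_subset_Ico (by have := hy.delay_le k; omega) le_rfl)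
      fun _ _ _ => dist_nonneg

theorem dist_sq_succ_le (hy : IsAsiArtSeq a b τ lam ik d y) {u : E} (hu : ∀ i, ⟪a i, u⟫ = b i)
    (hlam : ∀ k, 0 < lam k ∧ (τ + 1) * lam k ≤ 1) (k : ℕ) :
    dist (y (k + 1)) u ^ 2 ≤ dist (y k) u ^ 2 - (τ + 1) * dist (y k) (y (k + 1)) ^ 2 +
      ∑ j ∈ Ico (k - τ) k, dist (y j) (y (j + 1)) ^ 2 := by
  have hwindow : 0 ≤ ∑ j ∈ Ico (k - τ) k, dist (y j) (y (j + 1)) ^ 2 :=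
    sum_nonneg fun _ _ => sq_nonneg _
  by_cases hk : k ≤ τ
  · have hidle : y (k + 1) = y k := by rw [hy.succ_eq, if_pos hk]
    simp only [hidle, dist_self]
    linarith
  have hstep := hy.succ_eq k
  rw [if_neg hk] at hstep
  have hone := dist_sq_sub_smul_hyperplaneResidual_le (hu (ik k)) (hlam k).1 (y k) (y (k - d k))
  rw [← hstep] at hone
  set s := dist (y k) (y (k + 1))
  have hcross : 2 * s * dist (y k) (y (k - d k)) ≤
      τ * s ^ 2 + ∑ j ∈ Ico (k - τ) k, dist (y j) (y (j + 1)) ^ 2 := by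
    have hcard : (#(Ico (k - τ) k) : ℝ) ≤ τ := by
      exact_mod_cast (Nat.card_Ico _ _).trans_le (by omega)
    calc 2 * s * dist (y k) (y (k - d k))
        ≤ 2 * s * ∑ j ∈ Ico (k - τ) k, dist (y j) (y (j + 1)) := by
          gcongr
          exact hy.dist_delayed_le k
      _ ≤ #(Ico (k - τ) k) * s ^ 2 + ∑ j ∈ Ico (k - τ) k, dist (y j) (y (j + 1)) ^ 2 :=
          two_mul_mul_sum_le _ _ _
      _ ≤ τ * s ^ 2 + ∑ j ∈ Ico (k - τ) k, dist (y j) (y (j + 1)) ^ 2 := by gcongr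
  have hcoef : 2 * (τ + 1 : ℝ) ≤ 2 / lam k := by
    rw [le_div_iff₀ (hlam k).1]
    linarith [(hlam k).2]
  nlinarith [mul_le_mul_of_nonneg_right hcoef (sq_nonneg s)]

theorem abs_inner_delayed_sub_eq (hy : IsAsiArtSeq a b τ lam ik d y) {k : ℕ} (hk : τ < k)
    (ha : a (ik k) ≠ 0) (hlam : 0 < lam k) :
    |⟪a (ik k), y (k - d k)⟫ - b (ik k)| = ‖a (ik k)‖ * dist (y k) (y (k + 1)) / lam k := by
  rw [hy.succ_eq, if_neg hk.not_ge, dist_eq_norm, sub_sub_cancel, norm_smul,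
    norm_hyperplaneResidual, Real.norm_of_nonneg hlam.le]
  field_simp

theorem tendsto_inner_sub_along_control (hy : IsAsiArtSeq a b τ lam ik d y)
    (ha : ∀ i, a i ≠ 0) {C : ℝ} (hC : ∀ i, ‖a i‖ ≤ C) {ε : ℝ} (hε : 0 < ε)
    (hlam : ∀ k, ε ≤ lam k)
    (hstep : Tendsto (fun k => dist (y k) (y (k + 1))) atTop (𝓝 0)) :
    Tendsto (fun k => ⟪a (ik k), y k⟫ - b (ik k)) atTop (𝓝 0) := by
  refine squeeze_zero_norm' (eventually_atTop.2 ⟨τ + 1, fun k hk => ?_⟩)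
    (by simpa using (hstep.const_mul (C / ε)).add ((tendsto_sum_Ico_sub hstep τ).const_mul C))
  have hsplit : ⟪a (ik k), y k⟫ - b (ik k) =
      (⟪a (ik k), y (k - d k)⟫ - b (ik k)) + ⟪a (ik k), y k - y (k - d k)⟫ := by
    rw [inner_sub_right]
    ring
  have hlamk : 0 < lam k := hε.trans_le (hlam k)
  have hC0 : 0 ≤ C := (norm_nonneg _).trans (hC (ik k))
  rw [Real.norm_eq_abs, hsplit]
  refine (abs_add_le _ _).trans (add_le_add ?_ ?_)
  · have hCε : ‖a (ik k)‖ ≤ C / ε * lam k := (hC _).trans <| by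
      rw [div_mul_eq_mul_div, le_div_iff₀ hε]
      exact mul_le_mul_of_nonneg_left (hlam k) hC0
    rw [hy.abs_inner_delayed_sub_eq (by omega) (ha _) hlamk, div_le_iff₀ hlamk]
    calc ‖a (ik k)‖ * dist (y k) (y (k + 1))
        ≤ C / ε * lam k * dist (y k) (y (k + 1)) := by gcongr
      _ = C / ε * dist (y k) (y (k + 1)) * lam k := by ring
  · calc |⟪a (ik k), y k - y (k - d k)⟫| ≤ ‖a (ik k)‖ * dist (y k) (y (k - d k)) := by
          rw [dist_eq_norm]
          exact abs_real_inner_le_norm _ _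
      _ ≤ C * ∑ j ∈ Ico (k - τ) k, dist (y j) (y (j + 1)) :=
          mul_le_mul (hC _) (hy.dist_delayed_le k) dist_nonneg hC0

theorem exists_tendsto_solution [ProperSpace E] [Finite ι] (hy : IsAsiArtSeq a b τ lam ik d y)
    (ha : ∀ i, a i ≠ 0) (hsol : ∃ u, ∀ i, ⟪a i, u⟫ = b i)
    (hcyc : ∃ M', ∀ k i, ∃ l, k + 1 ≤ l ∧ l ≤ k + M' ∧ ik l = i) {ε : ℝ} (hε : 0 < ε)
    (hlam : ∀ k, ε ≤ lam k ∧ (τ + 1) * lam k ≤ 1) :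
    ∃ z, (∀ i, ⟪a i, z⟫ = b i) ∧ Tendsto y atTop (𝓝 z) := by
  obtain ⟨u, hu⟩ := hsol
  obtain ⟨M', hcyc⟩ := hcyc
  obtain ⟨C, hC⟩ := (Set.finite_range fun i => ‖a i‖).bddAbove
  set S := fun j => dist (y j) (y (j + 1)) ^ 2
  have hS : ∀ j, 0 ≤ S j := fun _ => sq_nonneg _
  have hdecr := fun {u} (hu : ∀ i, ⟪a i, u⟫ = b i) =>
    hy.dist_sq_succ_le hu fun k => ⟨hε.trans_le (hlam k).1, (hlam k).2⟩
  have hbound := add_sum_le_of_le_sub_add_sum_Ico (v := fun n => dist (y n) u ^ 2) hS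
    (hdecr hu)
  have hSs : Summable S := summable_of_sum_range_le (c := dist (y 0) u ^ 2) hS fun n => by
    linarith [hbound n, sq_nonneg (dist (y n) u)]
  have hstep : Tendsto (fun k => dist (y k) (y (k + 1))) atTop (𝓝 0) := by
    simpa [S, Real.sqrt_sq dist_nonneg] using hSs.tendsto_atTop_zero.sqrt
  have hball : ∀ n, y n ∈ Metric.closedBall u (dist (y 0) u) := fun n => by
    rw [Metric.mem_closedBall, ← pow_le_pow_iff_left₀ dist_nonneg dist_nonneg two_ne_zero]
    linarith [hbound n, sum_nonneg fun k (_ : k ∈ range n) => hS k]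
  obtain ⟨z, -, φ, hφ, hyz⟩ := tendsto_subseq_of_bounded Metric.isBounded_closedBall hball
  have hres : ∀ i, Tendsto (fun k => ⟪a i, y k⟫ - b i) atTop (𝓝 0) := fun i =>
    tendsto_zero_of_tendsto_zero_along_control (g := fun i x => ⟪a i, x⟫ - b i) (K := ‖a i‖₊) i
      (LipschitzWith.of_dist_le_mul fun x x' => by
        rw [Real.dist_eq, sub_sub_sub_cancel_right, ← inner_sub_right, dist_eq_norm]
        exact abs_real_inner_le_norm _ _)
      (fun k => hcyc k i) hstep
      (hy.tendsto_inner_sub_along_control ha (fun i => hC ⟨i, rfl⟩) hε (fun k => (hlam k).1)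
        hstep)
  have hz : ∀ i, ⟪a i, z⟫ = b i := fun i => sub_eq_zero.1 <|
    tendsto_nhds_unique
      ((((continuous_const.inner continuous_id).sub continuous_const).tendsto z).comp hyz)
      ((hres i).comp hφ.tendsto_atTop)
  refine ⟨z, hz, tendsto_of_dist_sq_le_add_of_summable (fun _ => sum_nonneg fun j _ => hS j)
    (summable_sum_Ico_sub hS hSs τ) (fun k => ?_) hφ hyz⟩
  linarith [hdecr hz k, mul_nonneg (by positivity : (0 : ℝ) ≤ τ + 1) (hS k)]

end IsAsiArtSeq

end AsiArt

theorem asi_art_convergence_general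
    (M N τ : ℕ)
    (A : Matrix (Fin M) (Fin N) ℝ) (b : Fin M → ℝ)
    (hrows : ∀ i, (fun j => A i j) ≠ 0)
    (hconsistent : ∃ u : Fin N → ℝ, A.mulVec u = b)
    (x : ℕ → (Fin N → ℝ)) (lam : ℕ → ℝ) (ik : ℕ → Fin M) (d : ℕ → ℕ)
    (hcyc : ∃ M' : ℕ, M ≤ M' ∧ ∀ k, ∀ i : Fin M,
      ∃ l, k + 1 ≤ l ∧ l ≤ k + M' ∧ ik l = i)
    (hd : ∀ k, d k ≤ min τ (k - 1))
    (hx0 : x 0 = x 1)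
    (hup : ∀ k, 1 ≤ k → x (k + 1) =
      if k ≤ τ then x k
      else x k -
        (lam k * (((∑ l, A (ik k) l * x (k - d k) l) - b (ik k)) /
          ∑ l, (A (ik k) l) ^ 2)) • (fun j => A (ik k) j))
    (ε : ℝ) (hε : 0 < ε)
    (hlam2 : ∀ k, ε ≤ lam k ∧ lam k ≤ 1 / (2 * (τ : ℝ) + 1 + ε)) :
    ∃ xstar : Fin N → ℝ, A.mulVec xstar = b ∧
      Tendsto x atTop (nhds xstar) := by
  set a : Fin M → EuclideanSpace ℝ (Fin N) := fun i => WithLp.toLp 2 (A i)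
  have hinner : ∀ i v, ⟪a i, WithLp.toLp 2 v⟫ = ∑ l, A i l * v l := fun i v => by
    simp [a, EuclideanSpace.inner_toLp_toLp, dotProduct, mul_comm]
  have hnorm : ∀ i, ‖a i‖ ^ 2 = ∑ l, A i l ^ 2 := fun i => by
    simp [a, EuclideanSpace.norm_sq_eq]
  have hy : IsAsiArtSeq a b τ lam ik d fun k => WithLp.toLp 2 (x k) := by
    refine ⟨fun k => (hd k).trans (min_le_left _ _), fun k => ?_⟩
    rcases Nat.eq_zero_or_pos k with rfl | hk
    · simp [hx0]
    · rw [hup k hk]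
      split_ifs
      · rfl
      · rw [hyperplaneResidual, hinner, hnorm, mul_smul]
        rfl
  have hlam : ∀ k, ε ≤ lam k ∧ (τ + 1) * lam k ≤ 1 := fun k => by
    refine ⟨(hlam2 k).1, ?_⟩
    have hmul := (le_div_iff₀ (by positivity)).1 (hlam2 k).2
    nlinarith [(hlam2 k).1, τ.cast_nonneg (α := ℝ)]
  obtain ⟨u, hu⟩ := hconsistent
  obtain ⟨z, hz, hlim⟩ := hy.exists_tendsto_solution (fun i h => hrows i (by simpa [a] using h))
    ⟨WithLp.toLp 2 u, fun i => by rw [hinner, ← hu]; rfl⟩ (hcyc.imp fun _ => And.right) hε hlam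
  refine ⟨z.ofLp, funext fun i => ?_, ((PiLp.continuous_ofLp 2 _).tendsto z).comp hlim⟩
  rw [← hz, hinner]
  rfl

/-- convergence of ASI–ART. Let `A ∈ ℝ^{M×N}` with nonzero rows
`a¹, ..., a^M` and `b ∈ ℝ^M` with `A·x = b` consistent. The ASI–ART iteration is
`x (k+1) = x k` for `k ≤ τ` and otherwise
`x (k+1) = x k - λ k * ((⟨a^{i k}, x̂ k⟩ - b (i k))/‖a^{i k}‖²) • a^{i k}`,
where `x̂ k := x (k - d k)`, the delays satisfy `0 ≤ d k ≤ min τ (k-1)`, and `(i k)` is an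
almost cyclic control on `{1, ..., M}`. If there is `ε > 0` with
`ε ≤ λ k ≤ 1/(2τ + 1 + ε)` for all `k`, then `x` converges to a solution `x*` of
`A·x = b`. -/
theorem asi_art_convergence
    (M N τ : ℕ) (hM : 0 < M)
    (A : Matrix (Fin M) (Fin N) ℝ) (b : Fin M → ℝ)
    (hrows : ∀ i, (fun j => A i j) ≠ 0)
    (hconsistent : ∃ u : Fin N → ℝ, A.mulVec u = b)
    (x : ℕ → (Fin N → ℝ)) (lam : ℕ → ℝ) (ik : ℕ → Fin M) (d : ℕ → ℕ)
    (hlam : ∀ k, 0 < lam k ∧ lam k < 1)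
    (hcyc : ∃ M' : ℕ, M ≤ M' ∧ ∀ k, ∀ i : Fin M,
      ∃ l, k + 1 ≤ l ∧ l ≤ k + M' ∧ ik l = i)
    (hd : ∀ k, d k ≤ min τ (k - 1))
    (hx0 : x 0 = x 1)
    (hup : ∀ k, 1 ≤ k → x (k + 1) =
      if k ≤ τ then x k
      else x k -
        (lam k * (((∑ l, A (ik k) l * x (k - d k) l) - b (ik k)) /
          ∑ l, (A (ik k) l) ^ 2)) • (fun j => A (ik k) j))
    (ε : ℝ) (hε : 0 < ε)
    (hlam2 : ∀ k, ε ≤ lam k ∧ lam k ≤ 1 / (2 * (τ : ℝ) + 1 + ε)) :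
    ∃ xstar : Fin N → ℝ, A.mulVec xstar = b ∧
      Tendsto x atTop (nhds xstar) :=
  asi_art_convergence_general M N τ A b hrows hconsistent x lam ik d hcyc hd hx0 hup ε hε hlam2
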